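/- arXiv:1112.0705 — 3 statements merged into one kernel-verified Lean document; each statement's English description precedes it below -/
import Mathlib

section
/- For all N, M ∈ ℕ with (N,M) not in the exceptional set E = {(0,0),(1,0),(0,1),(1,1)}, the pruning automorphism ρ_{N,M} is an involution: ρ_{N,M} ∘ ρ_{N,M} = id on Σ₂. (Key point: if the pruning pattern occurs at two positions i ≠ j, then the window of the occurrence at j does not involve coordinate i, so the flips performed at the various pattern positions do not create or destroy pattern occurrences.) -/
/-- The full 2-shift `Σ₂ = {0,1}^ℤ` (product topology, `{0,1}` discrete). -/
abbrev Sigma2 := ℤ → Fin 2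

/-- The shift map `(σ s)_i = s_{i+1}`. -/
def shift (s : Sigma2) : Sigma2 := fun i => s (i + 1)

/-- The pruning pattern occurs in `s` at position `i` if `s_{i-1} = 1`, `s_{i+1} = 1`,
`s_{i-1-k} = 0` for `1 ≤ k ≤ N` and `s_{i+1+k} = 0` for `1 ≤ k ≤ M`. -/
def pattern (N M : ℕ) (s : Sigma2) (i : ℤ) : Prop :=
  s (i - 1) = 1 ∧ s (i + 1) = 1 ∧
    (∀ k : ℕ, 1 ≤ k → k ≤ N → s (i - 1 - (k : ℤ)) = 0) ∧
    (∀ k : ℕ, 1 ≤ k → k ≤ M → s (i + 1 + (k : ℤ)) = 0)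

open Classical in
/-- The pruning automorphism `ρ_{N,M}`: it flips coordinate `i` exactly when the
pruning pattern occurs in `s` at position `i`. -/
noncomputable def rho (N M : ℕ) (s : Sigma2) : Sigma2 :=
  fun i => if pattern N M s i then 1 - s i else s i

/-- The window of coordinates that the pattern at position `i` reads. -/
def inW (N M : ℕ) (i j : ℤ) : Prop :=
  (∃ k : ℕ, k ≤ N ∧ j = i - 1 - (k : ℤ)) ∨ (∃ k : ℕ, k ≤ M ∧ j = i + 1 + (k : ℤ))

lemma fin2_ne : (1 : Fin 2) ≠ 0 := by decide

/-- Key combinatorial claim: away from the exceptional set, two pattern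
occurrences cannot be so close that one lies in the window of the other. -/
lemma no_two (N M : ℕ) (h2 : 2 ≤ N ∨ 2 ≤ M) (t : Sigma2) (i j : ℤ)
    (hi : pattern N M t i) (hW : inW N M i j) (hj : pattern N M t j) : False := by
  obtain ⟨hi1, hi2, hi3, hi4⟩ := hi
  obtain ⟨hj1, hj2, hj3, hj4⟩ := hj
  rcases hW with ⟨k, hkN, rfl⟩ | ⟨k, hkM, rfl⟩
  · -- j = i - 1 - k
    rcases Nat.lt_or_ge k 2 with hk2 | hk2
    · interval_cases k
      · -- k = 0 : j = i - 1
        rcases Nat.eq_zero_or_pos N with hN | hN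
        · -- N = 0, so M ≥ 2 ≥ 1
          have hM : 1 ≤ M := by omega
          have h0 := hj4 1 le_rfl hM
          have he : i - 1 - ((0:ℕ):ℤ) + 1 + ((1:ℕ):ℤ) = i + 1 := by push_cast; ring
          rw [he] at h0
          exact fin2_ne (hi2.symm.trans h0)
        · have h0 := hi3 1 le_rfl hN
          have he : i - 1 - ((1:ℕ):ℤ) = i - 1 - ((0:ℕ):ℤ) - 1 := by push_cast; ring
          rw [he] at h0
          exact fin2_ne (hj1.symm.trans h0)
      · -- k = 1 : j = i - 2
        rcases Nat.lt_or_ge N 2 with hN | hN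
        · -- N = 1 (since k ≤ N), so M ≥ 2
          have hM : 2 ≤ M := by omega
          have h0 := hj4 2 (by omega) hM
          have he : i - 1 - ((1:ℕ):ℤ) + 1 + ((2:ℕ):ℤ) = i + 1 := by push_cast; ring
          rw [he] at h0
          exact fin2_ne (hi2.symm.trans h0)
        · have h0 := hi3 2 (by omega) hN
          have he : i - 1 - ((2:ℕ):ℤ) = i - 1 - ((1:ℕ):ℤ) - 1 := by push_cast; ring
          rw [he] at h0
          exact fin2_ne (hj1.symm.trans h0)
    · -- k ≥ 2
      have h0 := hi3 (k - 1) (by omega) (by omega)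
      have he : i - 1 - ((k - 1 : ℕ):ℤ) = i - 1 - (k:ℤ) + 1 := by
        have : (1:ℕ) ≤ k := by omega
        push_cast [this]; ring
      rw [he] at h0
      exact fin2_ne (hj2.symm.trans h0)
  · -- j = i + 1 + k
    rcases Nat.lt_or_ge k 2 with hk2 | hk2
    · interval_cases k
      · rcases Nat.eq_zero_or_pos M with hM | hM
        · have hN : 1 ≤ N := by omega
          have h0 := hj3 1 le_rfl hN
          have he : i + 1 + ((0:ℕ):ℤ) - 1 - ((1:ℕ):ℤ) = i - 1 := by push_cast; ring
          rw [he] at h0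
          exact fin2_ne (hi1.symm.trans h0)
        · have h0 := hi4 1 le_rfl hM
          have he : i + 1 + ((1:ℕ):ℤ) = i + 1 + ((0:ℕ):ℤ) + 1 := by push_cast; ring
          rw [he] at h0
          exact fin2_ne (hj2.symm.trans h0)
      · rcases Nat.lt_or_ge M 2 with hM | hM
        · have hN : 2 ≤ N := by omega
          have h0 := hj3 2 (by omega) hN
          have he : i + 1 + ((1:ℕ):ℤ) - 1 - ((2:ℕ):ℤ) = i - 1 := by push_cast; ring
          rw [he] at h0
          exact fin2_ne (hi1.symm.trans h0)
        · have h0 := hi4 2 (by omega) hM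
          have he : i + 1 + ((2:ℕ):ℤ) = i + 1 + ((1:ℕ):ℤ) + 1 := by push_cast; ring
          rw [he] at h0
          exact fin2_ne (hj2.symm.trans h0)
    · have h0 := hi4 (k - 1) (by omega) (by omega)
      have he : i + 1 + ((k - 1 : ℕ):ℤ) = i + 1 + (k:ℤ) - 1 := by
        have : (1:ℕ) ≤ k := by omega
        push_cast [this]; ring
      rw [he] at h0
      exact fin2_ne (hj1.symm.trans h0)

/-- The pattern at `i` only reads coordinates in the window of `i`. -/
lemma pattern_of_agree {N M : ℕ} {t s : Sigma2} {i : ℤ}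
    (h : ∀ j, inW N M i j → t j = s j) (hp : pattern N M s i) : pattern N M t i := by
  obtain ⟨h1, h2, h3, h4⟩ := hp
  refine ⟨?_, ?_, ?_, ?_⟩
  · rw [h (i - 1) (Or.inl ⟨0, Nat.zero_le _, by simp⟩)]; exact h1
  · rw [h (i + 1) (Or.inr ⟨0, Nat.zero_le _, by simp⟩)]; exact h2
  · intro k hk1 hk2
    rw [h _ (Or.inl ⟨k, hk2, rfl⟩)]; exact h3 k hk1 hk2
  · intro k hk1 hk2
    rw [h _ (Or.inr ⟨k, hk2, rfl⟩)]; exact h4 k hk1 hk2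

lemma pattern_rho (N M : ℕ) (h2 : 2 ≤ N ∨ 2 ≤ M) (s : Sigma2) (i : ℤ) :
    pattern N M (rho N M s) i ↔ pattern N M s i := by
  have key : ∀ i, pattern N M s i → pattern N M (rho N M s) i := by
    intro i hp
    refine pattern_of_agree (fun j hj => ?_) hp
    have hnj : ¬ pattern N M s j := fun hpj => no_two N M h2 s i j hp hj hpj
    simp [rho, hnj]
  constructor
  · intro hpr
    by_contra hns
    by_cases hall : ∀ j, inW N M i j → rho N M s j = s j
    · exact hns (pattern_of_agree (fun j hj => (hall j hj).symm) hpr)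
    · push_neg at hall
      obtain ⟨j, hjW, hjd⟩ := hall
      have hpj : pattern N M s j := by
        by_contra hn
        exact hjd (by simp [rho, hn])
      exact no_two N M h2 (rho N M s) i j hpr hjW (key j hpj)
  · exact key i

/-- Away from the exceptional set `E = {(0,0),(1,0),(0,1),(1,1)}`, the pruning
automorphism is an involution: `ρ_{N,M} ∘ ρ_{N,M} = id`. -/
theorem rho_involution (N M : ℕ)
    (hE : (N, M) ∉ ({(0, 0), (1, 0), (0, 1), (1, 1)} : Set (ℕ × ℕ))) :
    rho N M ∘ rho N M = id := by
  have h2 : 2 ≤ N ∨ 2 ≤ M := by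
    simp only [Set.mem_insert_iff, Set.mem_singleton_iff, Prod.mk.injEq] at hE
    push_neg at hE
    omega
  funext s
  funext i
  simp only [Function.comp_apply, id_eq]
  have hsub : ∀ x : Fin 2, 1 - (1 - x) = x := by decide
  by_cases hp : pattern N M s i
  · have hpr : pattern N M (rho N M s) i := (pattern_rho N M h2 s i).mpr hp
    calc rho N M (rho N M s) i = 1 - rho N M s i := by simp [rho, hpr]
    _ = 1 - (1 - s i) := by simp [rho, hp]
    _ = s i := hsub _
  · have hpr : ¬ pattern N M (rho N M s) i := fun h => hp ((pattern_rho N M h2 s i).mp h)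
    simp [rho, hpr, hp]
end

section
/- (Devaney–Nitecki, empty locus) If a, b ∈ ℝ satisfy b ≠ 0 and a < −(1+|b|)²/4, then the Hénon map H_{a,b} has no bounded orbits: there is no point p ∈ ℝ² for which the full orbit {H_{a,b}^n(p) : n ∈ ℤ} is a bounded subset of ℝ²; that is, K^ℝ_{a,b} = ∅. -/
/-- The Hénon map `H_{a,b}(x,y) = (a - x² - b·y, x)` on `ℝ²`. -/
def henon (a b : ℝ) (p : ℝ × ℝ) : ℝ × ℝ := (a - p.1 ^ 2 - b * p.2, p.1)

/-- `K^ℝ_{a,b}`: the set of points whose full orbit `{H^n(p) : n ∈ ℤ}` is bounded.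
A full orbit through `p` is a sequence `o : ℤ → ℝ²` with `o 0 = p` and
`o (n+1) = H (o n)` for all `n ∈ ℤ`. -/
def henonK (a b : ℝ) : Set (ℝ × ℝ) :=
  {p | ∃ o : ℤ → ℝ × ℝ, o 0 = p ∧ (∀ n : ℤ, o (n + 1) = henon a b (o n)) ∧
    Bornology.IsBounded (Set.range o)}

/-- (Devaney–Nitecki, empty locus) If `b ≠ 0` and `a < -(1+|b|)²/4`, then the
Hénon map `H_{a,b}` has no bounded orbits: `K^ℝ_{a,b} = ∅`. -/
theorem henonK_empty (a b : ℝ) (hb : b ≠ 0) (ha : a < -(1 + |b|) ^ 2 / 4) :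
    henonK a b = ∅ := by
  ext p
  simp only [Set.mem_empty_iff_false, iff_false]
  rintro ⟨o, h0, hrec, hbd⟩
  set x : ℤ → ℝ := fun n => (o n).1 with hx
  -- boundedness of the first coordinates
  obtain ⟨R, hR⟩ := hbd.exists_norm_le
  have hxR : ∀ n : ℤ, |x n| ≤ R := by
    intro n
    have h1 : ‖(o n).1‖ ≤ ‖o n‖ := norm_fst_le (o n)
    have h2 : ‖o n‖ ≤ R := hR (o n) (Set.mem_range_self n)
    calc |x n| = ‖(o n).1‖ := rfl
      _ ≤ R := h1.trans h2
  have hbdd : BddAbove (Set.range fun n : ℤ => |x n|) := by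
    refine ⟨R, ?_⟩
    rintro r ⟨n, rfl⟩
    exact hxR n
  set M : ℝ := ⨆ n : ℤ, |x n| with hM
  have hle : ∀ n : ℤ, |x n| ≤ M := fun n => le_ciSup hbdd n
  have hM0 : (0 : ℝ) ≤ M := (abs_nonneg (x 0)).trans (hle 0)
  -- second coordinate
  have hsnd : ∀ n : ℤ, (o n).2 = x (n - 1) := by
    intro n
    have := hrec (n - 1)
    rw [sub_add_cancel] at this
    rw [this]
    rfl
  -- recurrence for x
  have hxrec : ∀ n : ℤ, x (n + 1) = a - x n ^ 2 - b * x (n - 1) := by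
    intro n
    have := hrec n
    have h1 : x (n + 1) = (henon a b (o n)).1 := by show (o (n+1)).1 = _; rw [this]
    rw [h1, henon, hsnd n]
  set C : ℝ := a + M + |b| * M with hC
  have hsq : ∀ n : ℤ, x n ^ 2 ≤ C := by
    intro n
    have h1 : x n ^ 2 = a - x (n + 1) - b * x (n - 1) := by
      have := hxrec n; linarith
    have h2 : -(x (n + 1)) ≤ M := by
      have := hle (n + 1); have := neg_abs_le (x (n + 1)); linarith
    have h3 : -(b * x (n - 1)) ≤ |b| * M := by
      have h4 : |b * x (n - 1)| ≤ |b| * M := by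
        rw [abs_mul]
        exact mul_le_mul_of_nonneg_left (hle (n - 1)) (abs_nonneg b)
      have := neg_abs_le (b * x (n - 1)); linarith
    rw [h1]; linarith
  have hC0 : (0 : ℝ) ≤ C := (sq_nonneg (x 0)).trans (hsq 0)
  have hMC : M ≤ Real.sqrt C := by
    apply ciSup_le
    intro n
    have := Real.sqrt_le_sqrt (hsq n)
    rwa [Real.sqrt_sq_eq_abs] at this
  have hM2 : M ^ 2 ≤ C := by
    have := mul_self_le_mul_self hM0 hMC
    rw [Real.mul_self_sqrt hC0] at this
    nlinarith
  have hb0 : (0 : ℝ) ≤ |b| := abs_nonneg b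
  nlinarith [sq_nonneg (M - (1 + |b|) / 2)]
end

section
/- (Devaney–Nitecki, real horseshoe locus) If a, b ∈ ℝ satisfy b ≠ 0 and a > (5 + 2√5)(1+|b|)²/4, then the Hénon map H_{a,b} restricted to K^ℝ_{a,b} is topologically conjugate to the full 2-shift: there exists a homeomorphism h from K^ℝ_{a,b} (with the subspace topology of ℝ²) onto Σ₂ such that h(H_{a,b}(p)) = σ(h(p)) for all p ∈ K^ℝ_{a,b}. -/
/-!
A real orbit of `H_{a,b}` is the same as a bi-infinite sequence `x` with
`x (n + 1) = a - x n ^ 2 - b * x (n - 1)`, the orbit being `n ↦ (x n, x (n - 1))`.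
Let `R` be the positive root of `R² = a + (1 + |b|) R` and `r² = a - (1 + |b|) R`; the
hypothesis on `a` says exactly that `1 + |b| < 2 r`. A sup argument shows that every bounded
such sequence satisfies `r ≤ |x n| ≤ R`. For a sign pattern `s`, the map
`x ↦ (n ↦ ±√(a - x (n + 1) - b * x (n - 1)))` with signs from `s` is then a contraction of the
sup norm with constant `(1 + |b|) / (2 r)`, so each itinerary is realised by exactly one bounded
sequence. The bounded sequences form a compact subset of `ℝ^ℤ`, on which the itinerary map
onto `Σ₂` is a continuous bijection; for `b ≠ 0` a sequence is also determined by
`(x 0, x (-1))`. Both maps are therefore homeomorphisms, and both turn the shift of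
sequences into `H_{a,b}` and `σ` respectively.
-/

open Set Function
open scoped BoundedContinuousFunction

def IsHenonSeq (a b : ℝ) (x : ℤ → ℝ) : Prop :=
  ∀ n, x (n + 1) = a - x n ^ 2 - b * x (n - 1)

def henonArg (a b : ℝ) (x : ℤ → ℝ) (n : ℤ) : ℝ :=
  a - x (n + 1) - b * x (n - 1)

theorem isHenonSeq_iff_sq_eq {a b : ℝ} {x : ℤ → ℝ} :
    IsHenonSeq a b x ↔ ∀ n, x n ^ 2 = henonArg a b x n :=
  forall_congr' fun n => by unfold henonArg; constructor <;> intro h <;> linarith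

theorem abs_henonArg_sub_le {a b C : ℝ} {x y : ℤ → ℝ} (h : ∀ n, |x n - y n| ≤ C) (n : ℤ) :
    |henonArg a b x n - henonArg a b y n| ≤ (1 + |b|) * C := by
  have hb : |b * (x (n - 1) - y (n - 1))| ≤ |b| * C := by
    rw [abs_mul]; exact mul_le_mul_of_nonneg_left (h _) (abs_nonneg b)
  calc |henonArg a b x n - henonArg a b y n|
      = |(x (n + 1) - y (n + 1)) + b * (x (n - 1) - y (n - 1))| := by
        rw [← abs_neg]; unfold henonArg; ring_nf
    _ ≤ |x (n + 1) - y (n + 1)| + |b * (x (n - 1) - y (n - 1))| := abs_add_le _ _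
    _ ≤ (1 + |b|) * C := by linarith [h (n + 1)]

theorem henonArg_mem_Icc (a b : ℝ) {R : ℝ} {x : ℤ → ℝ} (h : ∀ n, |x n| ≤ R) (n : ℤ) :
    henonArg a b x n ∈ Icc (a - (1 + |b|) * R) (a + (1 + |b|) * R) := by
  have hx := abs_henonArg_sub_le (a := a) (b := b) (y := 0) (by simpa using h) n
  rw [show henonArg a b 0 n = a by simp [henonArg], abs_le] at hx
  constructor <;> linarith [hx.1, hx.2]

structure IsHorseshoeRadius (a b R : ℝ) : Prop where
  nonneg : 0 ≤ R
  sq_eq : R ^ 2 = a + (1 + |b|) * R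
  gap : (1 + |b|) ^ 2 < 4 * (a - (1 + |b|) * R)

namespace IsHorseshoeRadius

variable {a b R : ℝ}

theorem gap_pos (hR : IsHorseshoeRadius a b R) : 0 < a - (1 + |b|) * R := by
  nlinarith [hR.gap, sq_nonneg (1 + |b|)]

theorem gap_le_sq (hR : IsHorseshoeRadius a b R) : a - (1 + |b|) * R ≤ R ^ 2 := by
  nlinarith [hR.sq_eq, hR.nonneg, abs_nonneg b]

theorem le_of_sq_le (hR : IsHorseshoeRadius a b R) {t : ℝ}
    (h : t ^ 2 ≤ a + (1 + |b|) * t) : t ≤ R := by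
  have hRW : 1 + |b| ≤ R := by nlinarith [hR.sq_eq, hR.gap, hR.nonneg]
  nlinarith [hR.sq_eq, abs_nonneg b]

end IsHorseshoeRadius

theorem exists_isHorseshoeRadius {a b : ℝ}
    (ha : (5 + 2 * √5) * (1 + |b|) ^ 2 / 4 < a) : ∃ R, IsHorseshoeRadius a b R := by
  set W := 1 + |b|
  have h5 : √5 ^ 2 = 5 := Real.sq_sqrt (by norm_num)
  have h5' : 2 ≤ √5 := by nlinarith [Real.sqrt_nonneg 5]
  have ha3 : 3 * W ^ 2 < 4 * a := by nlinarith
  set D := √(W ^ 2 + 4 * a)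
  have hD : D ^ 2 = W ^ 2 + 4 * a := Real.sq_sqrt (by nlinarith)
  -- For `R = (W + D) / 2` the gap condition is `2WD < 4a - 3W²`; squared, `4a > (5 + 2√5)W²`.
  have hfactor : 0 < (4 * a - 3 * W ^ 2) ^ 2 - (2 * W * D) ^ 2 := by
    have : (4 * a - 3 * W ^ 2) ^ 2 - (2 * W * D) ^ 2
        = (4 * a - (5 + 2 * √5) * W ^ 2) * (4 * a - (5 - 2 * √5) * W ^ 2) := by
      linear_combination (-4 * W ^ 2) * hD + 4 * W ^ 4 * h5
    rw [this]
    apply mul_pos <;> nlinarith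
  have hkey : 2 * W * D < 4 * a - 3 * W ^ 2 :=
    lt_of_pow_lt_pow_left₀ 2 (by linarith) (by linarith)
  refine ⟨(W + D) / 2, by positivity, by linear_combination hD / 4, by linarith⟩

theorem IsHenonSeq.abs_le {a b R : ℝ} {x : ℤ → ℝ} (hR : IsHorseshoeRadius a b R)
    (hx : IsHenonSeq a b x) (hbdd : BddAbove (range fun n => |x n|)) (n : ℤ) : |x n| ≤ R := by
  set T := ⨆ m, |x m|
  have hxT : ∀ m, |x m| ≤ T := fun m => le_ciSup hbdd m
  have hT0 : 0 ≤ T := (abs_nonneg _).trans (hxT 0)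
  have hsq : ∀ m, x m ^ 2 ≤ a + (1 + |b|) * T := fun m =>
    (isHenonSeq_iff_sq_eq.1 hx m).trans_le (henonArg_mem_Icc a b hxT m).2
  have hnonneg : 0 ≤ a + (1 + |b|) * T := (sq_nonneg _).trans (hsq 0)
  have hT : T ≤ √(a + (1 + |b|) * T) := ciSup_le fun m =>
    (Real.le_sqrt (abs_nonneg _) hnonneg).2 (by rw [sq_abs]; exact hsq m)
  exact (hxT n).trans (hR.le_of_sq_le ((Real.le_sqrt hT0 hnonneg).1 hT))

def spin (t : Fin 2) : ℝ := if t = 1 then 1 else -1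

theorem abs_spin (t : Fin 2) : |spin t| = 1 := by
  unfold spin; split_ifs <;> simp

theorem spin_mul_spin (t : Fin 2) : spin t * spin t = 1 := by
  unfold spin; split_ifs <;> norm_num

noncomputable def itinerary (x : ℤ → ℝ) : Sigma2 := fun n => if 0 < x n then 1 else 0

theorem spin_itinerary_mul (x : ℤ → ℝ) (n : ℤ) : spin (itinerary x n) * x n = |x n| := by
  by_cases h : 0 < x n
  · simp [spin, itinerary, h, abs_of_pos h]
  · simp [spin, itinerary, h, abs_of_nonpos (not_lt.1 h)]

theorem itinerary_apply_of_pos {x : ℤ → ℝ} {n : ℤ} {t : Fin 2} (h : 0 < spin t * x n) :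
    itinerary x n = t := by
  fin_cases t
  · have hx : x n < 0 := by simpa [spin] using h
    simp [itinerary, hx.not_gt]
  · have hx : 0 < x n := by simpa [spin] using h
    simp [itinerary, hx]

def henonSeqs (a b R : ℝ) : Set (ℤ → ℝ) := {x | IsHenonSeq a b x ∧ ∀ n, |x n| ≤ R}

theorem abs_sqrt_sub_sqrt_le {c u v : ℝ} (hc : 0 < c) (hu : c ≤ u) (hv : c ≤ v) :
    |√u - √v| ≤ |u - v| / (2 * √c) := by
  have hsu : √c ≤ √u := Real.sqrt_le_sqrt hu
  have hsv : √c ≤ √v := Real.sqrt_le_sqrt hv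
  have hc' : 0 < √c := Real.sqrt_pos.2 hc
  rw [le_div_iff₀ (by positivity)]
  calc |√u - √v| * (2 * √c) ≤ |√u - √v| * (√u + √v) := by gcongr; linarith
    _ = |u - v| := by
      rw [← abs_of_pos (by linarith : 0 < √u + √v), ← abs_mul]
      congr 1
      linear_combination Real.sq_sqrt (hc.le.trans hu) - Real.sq_sqrt (hc.le.trans hv)

section HenonRootOp

open BoundedContinuousFunction

variable {a b R : ℝ}

theorem IsHorseshoeRadius.sqrt_max_min_le (hR : IsHorseshoeRadius a b R) (t : ℝ) :
    √(max (a - (1 + |b|) * R) (min t (R ^ 2))) ≤ R :=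
  (Real.sqrt_le_left hR.nonneg).2 (max_le hR.gap_le_sq (min_le_right _ _))

/-- `x n ↦ ±√(a - x (n + 1) - b * x (n - 1))`, with the sign given by `s`. The argument of the
root is truncated to `[a - (1 + |b|) R, R ^ 2]`: this does not change the map on bounded Hénon
sequences, but makes it a contraction of the whole space. -/
noncomputable def henonRootOp (hR : IsHorseshoeRadius a b R) (s : Sigma2) (x : ℤ →ᵇ ℝ) :
    ℤ →ᵇ ℝ :=
  ofNormedAddCommGroupDiscrete
    (fun n => spin (s n) * √(max (a - (1 + |b|) * R) (min (henonArg a b x n) (R ^ 2)))) R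
    fun n => by
      rw [Real.norm_eq_abs, abs_mul, abs_spin, one_mul, abs_of_nonneg (Real.sqrt_nonneg _)]
      exact hR.sqrt_max_min_le _

theorem contractingWith_henonRootOp (hR : IsHorseshoeRadius a b R) (s : Sigma2) :
    ContractingWith ⟨(1 + |b|) / (2 * √(a - (1 + |b|) * R)), by positivity⟩
      (henonRootOp hR s) := by
  set δ := a - (1 + |b|) * R
  have hδ : 0 < √δ := Real.sqrt_pos.2 hR.gap_pos
  constructor
  · change (1 + |b|) / (2 * √δ) < 1
    rw [div_lt_one (by positivity)]
    nlinarith [hR.gap, Real.sq_sqrt hR.gap_pos.le]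
  · refine LipschitzWith.of_dist_le_mul fun x y => ?_
    change dist _ _ ≤ (1 + |b|) / (2 * √δ) * dist x y
    rw [BoundedContinuousFunction.dist_le (by positivity)]
    intro n
    simp only [henonRootOp, coe_ofNormedAddCommGroupDiscrete, Real.dist_eq, ← mul_sub,
      abs_mul, abs_spin, one_mul]
    calc _ ≤ |max δ (min (henonArg a b x n) (R ^ 2)) - max δ (min (henonArg a b y n) (R ^ 2))|
          / (2 * √δ) := abs_sqrt_sub_sqrt_le hR.gap_pos (le_max_left _ _) (le_max_left _ _)
      _ ≤ |henonArg a b x n - henonArg a b y n| / (2 * √δ) := by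
          refine div_le_div_of_nonneg_right ?_ (by positivity)
          rw [max_comm, max_comm δ]
          refine (abs_max_sub_max_le_abs _ _ _).trans ?_
          exact (abs_min_sub_min_le_max _ _ _ _).trans_eq (by simp)
      _ ≤ (1 + |b|) * dist x y / (2 * √δ) := by
          gcongr
          exact abs_henonArg_sub_le (fun m => (Real.dist_eq _ _).symm.trans_le
            (dist_coe_le_dist m)) n
      _ = _ := by ring

theorem isFixedPt_henonRootOp_iff (hR : IsHorseshoeRadius a b R) {s : Sigma2} {x : ℤ →ᵇ ℝ} :
    IsFixedPt (henonRootOp hR s) x ↔ ⇑x ∈ henonSeqs a b R ∧ itinerary x = s := by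
  have htrunc : (∀ n, |x n| ≤ R) → ∀ n,
      max (a - (1 + |b|) * R) (min (henonArg a b x n) (R ^ 2)) = henonArg a b x n :=
    fun hx n => by
      obtain ⟨hlo, hhi⟩ := henonArg_mem_Icc a b hx n
      rw [min_eq_left (hhi.trans_eq hR.sq_eq.symm), max_eq_right hlo]
  constructor
  · intro hfix
    have hx : ∀ n, spin (s n) * √(max (a - (1 + |b|) * R) (min (henonArg a b x n) (R ^ 2)))
        = x n := fun n => DFunLike.congr_fun hfix n
    have hxR : ∀ n, |x n| ≤ R := fun n => by
      rw [← hx n, abs_mul, abs_spin, one_mul, abs_of_nonneg (Real.sqrt_nonneg _)]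
      exact hR.sqrt_max_min_le _
    simp only [htrunc hxR] at hx
    have harg_pos : ∀ n, 0 < henonArg a b x n := fun n =>
      hR.gap_pos.trans_le (henonArg_mem_Icc a b hxR n).1
    refine ⟨⟨isHenonSeq_iff_sq_eq.2 fun n => ?_, hxR⟩, funext fun n => itinerary_apply_of_pos ?_⟩
    · rw [← hx n, mul_pow, sq (spin _), spin_mul_spin, one_mul, Real.sq_sqrt (harg_pos n).le]
    · rw [← hx n, ← mul_assoc, spin_mul_spin, one_mul]
      exact Real.sqrt_pos.2 (harg_pos n)
  · rintro ⟨⟨hx, hxR⟩, rfl⟩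
    ext n
    change spin _ * _ = x n
    rw [htrunc hxR, ← isHenonSeq_iff_sq_eq.1 hx, Real.sqrt_sq_eq_abs, ← spin_itinerary_mul,
      ← mul_assoc, spin_mul_spin, one_mul]

end HenonRootOp

theorem existsUnique_itinerary_eq {a b R : ℝ} (hR : IsHorseshoeRadius a b R) (s : Sigma2) :
    ∃! x : henonSeqs a b R, itinerary x = s := by
  have hT := contractingWith_henonRootOp hR s
  obtain ⟨hx, hxs⟩ := (isFixedPt_henonRootOp_iff hR).1 hT.fixedPoint_isFixedPt
  refine ⟨⟨_, hx⟩, hxs, fun y hy => Subtype.ext ?_⟩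
  let y' : ℤ →ᵇ ℝ := .ofNormedAddCommGroupDiscrete y R y.2.2
  have hy' : IsFixedPt (henonRootOp hR s) y' := (isFixedPt_henonRootOp_iff hR).2 ⟨y.2, hy⟩
  exact congrArg DFunLike.coe (hT.fixedPoint_unique hy')

theorem isClosed_setOf_isHenonSeq (a b : ℝ) : IsClosed {x : ℤ → ℝ | IsHenonSeq a b x} := by
  simp only [IsHenonSeq, ofPred_forall]
  exact isClosed_iInter fun n => isClosed_eq (continuous_apply _) (by fun_prop)

theorem isCompact_henonSeqs (a b R : ℝ) : IsCompact (henonSeqs a b R) := by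
  have : henonSeqs a b R = {x | IsHenonSeq a b x} ∩ univ.pi fun _ => Icc (-R) R := by
    ext x
    simp only [henonSeqs, mem_inter_iff, mem_ofPred_eq, mem_univ_pi, mem_Icc, abs_le]
  rw [this]
  exact (isCompact_univ_pi fun _ => isCompact_Icc).inter_left (isClosed_setOf_isHenonSeq a b)

theorem ne_zero_of_mem_henonSeqs {a b R : ℝ} (hR : IsHorseshoeRadius a b R) {x : ℤ → ℝ}
    (hx : x ∈ henonSeqs a b R) (n : ℤ) : x n ≠ 0 := by
  intro h0
  have hsq := isHenonSeq_iff_sq_eq.1 hx.1 n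
  rw [h0] at hsq
  linarith [hR.gap_pos, (henonArg_mem_Icc a b hx.2 n).1]

theorem continuous_itinerary_henonSeqs {a b R : ℝ} (hR : IsHorseshoeRadius a b R) :
    Continuous fun x : henonSeqs a b R => itinerary x := by
  refine continuous_pi fun n => continuous_discrete_rng.2 fun t => ?_
  have hcont : Continuous fun x : henonSeqs a b R => (x : ℤ → ℝ) n :=
    (continuous_apply n).comp continuous_subtype_val
  fin_cases t
  · convert isOpen_lt hcont (continuous_const (y := 0)) using 1
    ext x
    simp [itinerary, (ne_zero_of_mem_henonSeqs hR x.2 n).le_iff_lt]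
  · convert isOpen_lt (continuous_const (y := 0)) hcont using 1
    ext x
    simp [itinerary]

def seqPoint (x : ℤ → ℝ) : ℝ × ℝ := (x 0, x (-1))

theorem IsHenonSeq.eq_of_seqPoint_eq {a b : ℝ} (hb : b ≠ 0) {x y : ℤ → ℝ}
    (hx : IsHenonSeq a b x) (hy : IsHenonSeq a b y) (h : seqPoint x = seqPoint y) : x = y := by
  let P : ℤ → Prop := fun n => x n = y n ∧ x (n - 1) = y (n - 1)
  have up : ∀ n, P n → P (n + 1) := fun n ⟨h0, h1⟩ => by
    refine ⟨by rw [hx, hy, h0, h1], by simpa using h0⟩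
  have down : ∀ n, P n → P (n - 1) := fun n ⟨h0, h1⟩ => by
    refine ⟨h1, mul_left_cancel₀ hb ?_⟩
    have ex := hx (n - 1)
    have ey := hy (n - 1)
    rw [sub_add_cancel] at ex ey
    linear_combination ex - ey - h0 - (x (n - 1) + y (n - 1)) * h1
  have hP : ∀ n, P n := fun n => by
    induction n using Int.induction_on with
    | zero => simpa [seqPoint, P] using h
    | succ n ih => exact up _ ih
    | pred n ih => exact down _ ih
  exact funext fun n => (hP n).1

theorem IsHenonSeq.seqPoint_comp_add_one {a b : ℝ} {x : ℤ → ℝ} (hx : IsHenonSeq a b x) :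
    seqPoint (fun n => x (n + 1)) = henon a b (seqPoint x) := by
  simpa [seqPoint, henon] using hx 0

theorem mapsTo_henon_henonK (a b : ℝ) : MapsTo (henon a b) (henonK a b) (henonK a b) := by
  rintro p ⟨o, ho0, ho, hbdd⟩
  refine ⟨fun n => o (n + 1), (ho 0).trans (congrArg _ ho0), fun n => ho (n + 1), ?_⟩
  exact hbdd.subset (range_subset_iff.2 fun n => mem_range_self (n + 1))

theorem henonK_eq_image {a b R : ℝ} (hR : IsHorseshoeRadius a b R) :
    henonK a b = seqPoint '' henonSeqs a b R := by
  ext p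
  constructor
  · rintro ⟨o, ho0, ho, hbdd⟩
    have hsnd : ∀ n, (o n).2 = (o (n - 1)).1 := fun n => by
      simpa [henon] using congrArg Prod.snd (ho (n - 1))
    have hx : IsHenonSeq a b fun n => (o n).1 := fun n => by
      simp [ho n, henon, hsnd n]
    obtain ⟨C, hC⟩ := isBounded_iff_forall_norm_le.1 hbdd
    have hxC : BddAbove (range fun n => |(o n).1|) :=
      ⟨C, range_subset_iff.2 fun n => (norm_fst_le (o n)).trans (hC _ (mem_range_self n))⟩
    refine ⟨_, ⟨hx, hx.abs_le hR hxC⟩, ?_⟩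
    rw [← ho0]
    exact Prod.ext rfl (by simpa [seqPoint] using (hsnd 0).symm)
  · rintro ⟨x, ⟨hx, hxR⟩, rfl⟩
    refine ⟨fun n => (x n, x (n - 1)), by simp [seqPoint], fun n => ?_, ?_⟩
    · simp [henon, hx n]
    · refine isBounded_iff_forall_norm_le.2 ⟨R, range_subset_iff.2 fun n => ?_⟩
      simp only [Prod.norm_def, Real.norm_eq_abs]
      exact max_le (hxR n) (hxR (n - 1))

section Conjugacy

variable {a b R : ℝ}

instance : CompactSpace (henonSeqs a b R) :=
  isCompact_iff_compactSpace.1 (isCompact_henonSeqs a b R)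

def henonSeqsShift (x : henonSeqs a b R) : henonSeqs a b R :=
  ⟨fun n => (x : ℤ → ℝ) (n + 1), fun n => by simpa [add_sub_cancel_right] using x.2.1 (n + 1),
    fun n => x.2.2 (n + 1)⟩

noncomputable def henonSeqsHomeomorphHenonK (hb : b ≠ 0) (hR : IsHorseshoeRadius a b R) :
    henonSeqs a b R ≃ₜ henonK a b :=
  have hbij : Bijective fun x : henonSeqs a b R =>
      (⟨seqPoint x, henonK_eq_image hR ▸ mem_image_of_mem _ x.2⟩ : henonK a b) := by
    refine ⟨fun x y h => Subtype.ext (x.2.1.eq_of_seqPoint_eq hb y.2.1 (congrArg Subtype.val h)),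
      fun p => ?_⟩
    obtain ⟨x, hx, hxp⟩ := (henonK_eq_image hR).subset p.2
    exact ⟨⟨x, hx⟩, Subtype.ext hxp⟩
  Continuous.homeoOfEquivCompactToT2 (f := .ofBijective _ hbij)
    ((((continuous_apply 0).prodMk (continuous_apply (-1))).comp
      continuous_subtype_val).subtype_mk _)

noncomputable def henonSeqsHomeomorphSigma2 (hR : IsHorseshoeRadius a b R) :
    henonSeqs a b R ≃ₜ Sigma2 :=
  Continuous.homeoOfEquivCompactToT2
    (f := .ofBijective _ ((bijective_iff_existsUnique _).2 (existsUnique_itinerary_eq hR)))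
    (continuous_itinerary_henonSeqs hR)

end Conjugacy

/-- (Devaney–Nitecki, real horseshoe locus) If `b ≠ 0` and
`a > (5 + 2√5)(1+|b|)²/4`, then `H_{a,b}` restricted to `K^ℝ_{a,b}` is
topologically conjugate to the full 2-shift. -/
theorem henon_real_horseshoe (a b : ℝ) (hb : b ≠ 0)
    (ha : a > (5 + 2 * Real.sqrt 5) * (1 + |b|) ^ 2 / 4) :
    Set.MapsTo (henon a b) (henonK a b) (henonK a b) ∧
    ∃ h : (henonK a b) ≃ₜ Sigma2,
      ∀ (p : henonK a b) (hq : henon a b (p : ℝ × ℝ) ∈ henonK a b),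
        h ⟨henon a b (p : ℝ × ℝ), hq⟩ = shift (h p) := by
  obtain ⟨R, hR⟩ := exists_isHorseshoeRadius ha
  set e := henonSeqsHomeomorphHenonK hb hR
  refine ⟨mapsTo_henon_henonK a b, e.symm.trans (henonSeqsHomeomorphSigma2 hR), fun p hq => ?_⟩
  obtain ⟨x, rfl⟩ := e.surjective p
  have hshift : e (henonSeqsShift x) = ⟨henon a b (e x), hq⟩ :=
    Subtype.ext x.2.1.seqPoint_comp_add_one
  rw [Homeomorph.trans_apply, Homeomorph.trans_apply, ← hshift, e.symm_apply_apply,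
    e.symm_apply_apply]
  rfl
end
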